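/- arXiv:math/0402387 — 2 statements merged into one kernel-verified Lean document; each statement's English description precedes it below -/
import Mathlib

section
/- Let A = R[z]/(z^n) with R = ℂ[[x]]. If 0 → M' → M → M'' → 0 is a short exact sequence of finitely generated A-modules, then the generalized ranks are additive: R(M) = R(M') + R(M''), where R(N) denotes the R-rank of ⊕_{i=1}^n z^{i-1}N/z^iN. -/
/-!
`Gr(M)` is the associated graded module of the finite filtration `M ⊇ zM ⊇ ⋯ ⊇ zⁿM = 0`.
Localization at `R ∖ {0}` is exact, so the rank over `R` is additive on short exact sequences of
finitely generated `R`-modules. Applied to `0 → z^{i+1}M → zⁱM → zⁱM/z^{i+1}M → 0` and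
telescoped, this gives `R(M) = rank_R M` (note `M` is finite over `R` since `A` is), and the
right-hand side is additive.
-/

open Polynomial

noncomputable section

abbrev Rx : Type := PowerSeries ℂ

abbrev An (n : ℕ) : Type := Rx[X] ⧸ Ideal.span {(X : Rx[X]) ^ n}

def zn (n : ℕ) : An n := Ideal.Quotient.mk _ (X : Rx[X])

def xn (n : ℕ) : An n := Ideal.Quotient.mk _ (C PowerSeries.X : Rx[X])

abbrev filtStep (n : ℕ) (M : Type) [AddCommGroup M] [Module (An n) M] (i : ℕ) :
    Submodule (An n) M :=
  Ideal.span {zn n ^ i} • (⊤ : Submodule (An n) M)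

/-- the `i`-th piece `zⁱM / z^{i+1}M` of the graded module of the canonical filtration. -/
abbrev grPiece (n : ℕ) (M : Type) [AddCommGroup M] [Module (An n) M] (i : ℕ) : Type :=
  ↥(filtStep n M i) ⧸
    (Submodule.comap (filtStep n M i).subtype (filtStep n M (i + 1)))

/-- the rank of an `R`-module, `dim_{Frac R} (N ⊗_R Frac R)`. -/
abbrev rrank (N : Type) [AddCommGroup N] [Module Rx N] : ℕ :=
  Module.finrank (FractionRing Rx) (LocalizedModule (nonZeroDivisors Rx) N)

/-- the generalized rank `R(M) = rank_R Gr(M)` of an `A`-module `M`. -/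
abbrev genRank (n : ℕ) (M : Type) [AddCommGroup M] [Module (An n) M] : ℕ :=
  ∑ i ∈ Finset.range n, @rrank (RestrictScalars Rx (An n) (grPiece n M i)) _
    (RestrictScalars.module Rx (An n) (grPiece n M i))

open scoped nonZeroDivisors

section LocalizedModule

variable {R : Type*} [CommRing R]
  {M' M M'' : Type*} [AddCommGroup M'] [Module R M'] [AddCommGroup M] [Module R M]
  [AddCommGroup M''] [Module R M'']

theorem finrank_localizedModule_congr (e : M ≃ₗ[R] M') :
    Module.finrank (FractionRing R) (LocalizedModule R⁰ M) =
      Module.finrank (FractionRing R) (LocalizedModule R⁰ M') :=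
  (LinearEquiv.ofBijective (LocalizedModule.map R⁰ e.toLinearMap)
    ⟨LocalizedModule.map_injective _ _ e.injective,
      LocalizedModule.map_surjective _ _ e.surjective⟩).finrank_eq

theorem finrank_localizedModule_eq_add [IsDomain R] [Module.Finite R M] {f : M' →ₗ[R] M}
    {g : M →ₗ[R] M''} (hf : Function.Injective f) (hg : Function.Surjective g)
    (hfg : Function.Exact f g) :
    Module.finrank (FractionRing R) (LocalizedModule R⁰ M) =
      Module.finrank (FractionRing R) (LocalizedModule R⁰ M') +
        Module.finrank (FractionRing R) (LocalizedModule R⁰ M'') := by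
  have hF := LocalizedModule.map_injective R⁰ f hf
  have hG := LocalizedModule.map_surjective R⁰ g hg
  have hFG : Function.Exact (LocalizedModule.map R⁰ f) (LocalizedModule.map R⁰ g) :=
    LocalizedModule.map_exact R⁰ f g hfg
  have := (LocalizedModule.map R⁰ g).finrank_range_add_finrank_ker
  rw [LinearMap.range_eq_top.mpr hG, finrank_top, LinearMap.exact_iff.mp hFG,
    LinearMap.finrank_range_of_inj hF] at this
  rw [← this, add_comm]

end LocalizedModule

namespace RestrictScalars

variable {R A : Type*} [CommRing R] [Ring A] [Algebra R A]
  {T U : Type*} [AddCommGroup T] [Module A T] [AddCommGroup U] [Module A U]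

/-- `RestrictScalars.module` is stated for the additive structure coming from `AddCommMonoid T`,
which instance search does not identify with the one coming from `AddCommGroup T`. -/
instance moduleOfAddCommGroup :
    @Module R (RestrictScalars R A T) _ AddCommGroup.toAddCommMonoid :=
  RestrictScalars.module R A T

def map (f : T →ₗ[A] U) : RestrictScalars R A T →ₗ[R] RestrictScalars R A U where
  toFun := f
  map_add' := f.map_add
  map_smul' r := f.map_smul (algebraMap R A r)

def mapEquiv (e : T ≃ₗ[A] U) : RestrictScalars R A T ≃ₗ[R] RestrictScalars R A U :=
  LinearEquiv.ofLinearMap (map e.toLinearMap) (map e.symm.toLinearMap)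
    (LinearMap.ext e.apply_symm_apply) (LinearMap.ext e.symm_apply_apply)

instance [Module.Finite R A] [Module.Finite A T] :
    @Module.Finite R (RestrictScalars R A T) _ AddCommGroup.toAddCommMonoid
      moduleOfAddCommGroup :=
  letI := moduleOrig R A T
  have : Module.Finite A (RestrictScalars R A T) := ‹Module.Finite A T›
  Module.Finite.trans A (RestrictScalars R A T)

end RestrictScalars

abbrev restrictedRank (R A T : Type*) [CommRing R] [Ring A] [Algebra R A] [AddCommGroup T]
    [Module A T] : ℕ :=
  Module.finrank (FractionRing R) (LocalizedModule R⁰ (RestrictScalars R A T))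

theorem restrictedRank_of_subsingleton {R A T : Type*} [CommRing R] [IsDomain R] [Ring A]
    [Algebra R A] [AddCommGroup T] [Module A T] [Subsingleton T] : restrictedRank R A T = 0 :=
  have : Subsingleton (RestrictScalars R A T) := ‹Subsingleton T›
  Module.finrank_zero_of_subsingleton

section RestrictedRank

variable {R A : Type*} [CommRing R] [IsDomain R] [Ring A] [Algebra R A] [Module.Finite R A]
  {M : Type*} [AddCommGroup M] [Module A M]

theorem restrictedRank_eq_add [Module.Finite A M] {M' M'' : Type*} [AddCommGroup M']
    [Module A M'] [AddCommGroup M''] [Module A M''] {f : M' →ₗ[A] M} {g : M →ₗ[A] M''}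
    (hf : Function.Injective f) (hg : Function.Surjective g) (hfg : Function.Exact f g) :
    restrictedRank R A M = restrictedRank R A M' + restrictedRank R A M'' :=
  finrank_localizedModule_eq_add (f := RestrictScalars.map f) (g := RestrictScalars.map g)
    hf hg hfg

variable [IsNoetherian A M]

theorem restrictedRank_submodule_eq_add {p q : Submodule A M} (h : p ≤ q) :
    restrictedRank R A q = restrictedRank R A p + restrictedRank R A (q ⧸ p.comap q.subtype) :=
  restrictedRank_eq_add (Submodule.inclusion_injective h) (Submodule.mkQ_surjective _) <|
    LinearMap.exact_iff.mpr <| by rw [Submodule.ker_mkQ, Submodule.range_inclusion]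

theorem restrictedRank_eq_sum_add (F : ℕ → Submodule A M) (hF : Antitone F) (hF0 : F 0 = ⊤)
    (m : ℕ) :
    restrictedRank R A M =
      ∑ i ∈ Finset.range m, restrictedRank R A (F i ⧸ (F (i + 1)).comap (F i).subtype) +
        restrictedRank R A (F m) := by
  induction m with
  | zero =>
    rw [Finset.sum_range_zero, zero_add, hF0]
    exact finrank_localizedModule_congr (RestrictScalars.mapEquiv Submodule.topEquiv.symm)
  | succ m ih =>
    rw [ih, restrictedRank_submodule_eq_add (hF m.le_succ), Finset.sum_range_succ]
    ring

end RestrictedRank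

instance (n : ℕ) : Module.Finite Rx (An n) :=
  (monic_X_pow n).finite_quotient

section CanonicalFiltration

variable (n : ℕ) (M : Type) [AddCommGroup M] [Module (An n) M]

theorem zn_pow_self : zn n ^ n = 0 :=
  Ideal.Quotient.eq_zero_iff_mem.mpr (Ideal.subset_span rfl)

theorem filtStep_zero : filtStep n M 0 = ⊤ := by
  rw [filtStep, pow_zero, Ideal.span_singleton_one, Submodule.top_smul]

theorem filtStep_self : filtStep n M n = ⊥ := by
  rw [filtStep, zn_pow_self, Ideal.span_singleton_eq_bot.mpr rfl, Submodule.bot_smul]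

theorem filtStep_antitone : Antitone (filtStep n M) := fun _ _ hij =>
  Submodule.smul_mono_left <|
    Ideal.span_singleton_le_span_singleton (α := An n) |>.mpr (pow_dvd_pow (zn n) hij)

theorem genRank_eq_restrictedRank [Module.Finite (An n) M] :
    genRank n M = restrictedRank Rx (An n) M := by
  rw [restrictedRank_eq_sum_add (filtStep n M) (filtStep_antitone n M) (filtStep_zero n M) n,
    filtStep_self, restrictedRank_of_subsingleton, add_zero]

end CanonicalFiltration

theorem stmt_4_general (n : ℕ)
    (M' M M'' : Type) [AddCommGroup M'] [Module (An n) M'] [AddCommGroup M]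
    [Module (An n) M] [AddCommGroup M''] [Module (An n) M'']
    [Module.Finite (An n) M'] [Module.Finite (An n) M] [Module.Finite (An n) M'']
    (f : M' →ₗ[An n] M) (g : M →ₗ[An n] M'')
    (hf : Function.Injective f) (hg : Function.Surjective g)
    (hfg : LinearMap.range f = LinearMap.ker g) :
    genRank n M = genRank n M' + genRank n M'' := by
  simp only [genRank_eq_restrictedRank]
  exact restrictedRank_eq_add hf hg (LinearMap.exact_iff.mpr hfg.symm)

theorem stmt_4 (n : ℕ) (hn : 0 < n)
    (M' M M'' : Type) [AddCommGroup M'] [Module (An n) M'] [AddCommGroup M]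
    [Module (An n) M] [AddCommGroup M''] [Module (An n) M'']
    [Module.Finite (An n) M'] [Module.Finite (An n) M] [Module.Finite (An n) M'']
    (f : M' →ₗ[An n] M) (g : M →ₗ[An n] M'')
    (hf : Function.Injective f) (hg : Function.Surjective g)
    (hfg : LinearMap.range f = LinearMap.ker g) :
    genRank n M = genRank n M' + genRank n M'' :=
  stmt_4_general n M' M M'' f g hf hg hfg
end
end

section
/- Let A = ℂ[[x,z]]/(z^2). Every finitely generated torsion-free A-module M is reflexive: the canonical map M → Hom_A(Hom_A(M, A), A) is an isomorphism. -/
/-!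
`A` is free of rank two over `R = ℂ[[x]]` with basis `1, z`, and the `z`-coefficient
`φ : A → R` is a Frobenius form: `a ↦ φ (a * ·)` is an isomorphism `A ≃ Hom_R(A, R)`.
Hence `f ↦ φ ∘ f` is an isomorphism `Hom_A(M, A) ≃ Hom_R(M, R)` for every `A`-module `M`,
compatible with the evaluation maps, so `M` is reflexive over `A` as soon as it is reflexive
over `R`. A finitely generated torsion-free `A`-module is finitely generated and torsion-free
over the discrete valuation ring `R`, hence free, hence reflexive.
-/

open Polynomial

noncomputable section

/-- `A = ℂ[[x]][z]/(z²)`, the local ring `𝒪_{2,P}` of a primitive double curve. -/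
abbrev A2 : Type := Rx[X] ⧸ Ideal.span {(X : Rx[X]) ^ 2}

/-- the class `z` in `A`. -/
def zq : A2 := Ideal.Quotient.mk _ (X : Rx[X])

/-- the element `x` in `A`. -/
def xq : A2 := Ideal.Quotient.mk _ (C PowerSeries.X : Rx[X])

/-- `B = A/(z) ≅ ℂ[[x]]`. -/
abbrev Bq : Type := A2 ⧸ Ideal.span {zq}

/-- the ideal `I_k = (x^k, z) ⊂ A`. -/
def Iq (k : ℕ) : Ideal A2 := Ideal.span {xq ^ k, zq}

/-- a module is torsion free if no nonzero element is annihilated by a power of `x`. -/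
def IsTorsionFree (M : Type) [AddCommGroup M] [Module A2 M] : Prop :=
  ∀ (m : M) (k : ℕ), xq ^ k • m = 0 → m = 0

namespace Module

variable {R A : Type*} [CommRing R] [CommRing A] [Algebra R A]
  {φ : A →ₗ[R] R} (hφ : Function.Bijective ((LinearMap.mul R A).compr₂ φ))

def frobeniusEquiv : A ≃ₗ[R] Dual R A := .ofBijective _ hφ

@[simp] lemma frobeniusEquiv_apply (a b : A) : frobeniusEquiv hφ a b = φ (a * b) := rfl

lemma frobeniusEquiv_symm_mul (k : Dual R A) (b : A) :
    φ ((frobeniusEquiv hφ).symm k * b) = k b :=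
  congr($((frobeniusEquiv hφ).apply_symm_apply k) b)

variable (M : Type*) [AddCommGroup M] [Module A M] [Module R M] [IsScalarTower R A M]

def dualOfFrobenius (g : Dual R M) : Dual A M where
  toFun m := (frobeniusEquiv hφ).symm (((Algebra.lsmul R R M).toLinearMap.compr₂ g).flip m)
  map_add' m n := by simp
  map_smul' a m := (frobeniusEquiv hφ).injective <| LinearMap.ext fun b => by
    rw [LinearEquiv.apply_symm_apply, frobeniusEquiv_apply, smul_eq_mul, RingHom.id_apply,
      mul_rotate, mul_assoc, frobeniusEquiv_symm_mul]
    simp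

@[simp] lemma dualOfFrobenius_apply (g : Dual R M) (m : M) :
    dualOfFrobenius hφ M g m =
      (frobeniusEquiv hφ).symm (((Algebra.lsmul R R M).toLinearMap.compr₂ g).flip m) := rfl

def dualEquivOfFrobenius : Dual A M ≃ₗ[R] Dual R M where
  toFun f := φ ∘ₗ f.restrictScalars R
  map_add' f g := by ext; simp
  map_smul' r f := by ext; simp
  invFun := dualOfFrobenius hφ M
  left_inv f := LinearMap.ext fun m => (frobeniusEquiv hφ).injective <| LinearMap.ext fun b => by
    simp [mul_comm]
  right_inv g := LinearMap.ext fun m => by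
    simpa using frobeniusEquiv_symm_mul hφ (((Algebra.lsmul R R M).toLinearMap.compr₂ g).flip m) 1

lemma dualEquivOfFrobenius_trans_dualMap_eval (m : M) :
    ((dualEquivOfFrobenius hφ (Dual A M)).trans (dualEquivOfFrobenius hφ M).symm.dualMap)
      (Dual.eval A M m) = Dual.eval R M m := by
  ext g
  exact congr($((dualEquivOfFrobenius hφ M).apply_symm_apply g) m)

theorem bijective_dual_eval_iff_of_frobenius
    (hφ : Function.Bijective ((LinearMap.mul R A).compr₂ φ)) :
    Function.Bijective (Dual.eval A M) ↔ Function.Bijective (Dual.eval R M) := by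
  have h : _ ∘ Dual.eval A M = Dual.eval R M :=
    funext (dualEquivOfFrobenius_trans_dualMap_eval hφ M)
  rw [← h, EquivLike.comp_bijective]

end Module

open Module

/- Without one `CommRing A2` instance to project from, `algebraMap Rx A2 r` gets stuck and `1 : A2`
does not unify with the unit of `*`. It is only a local instance because as a global one it would
change the instance terms in every later statement about `A2`. -/
abbrev A2.commRing : CommRing A2 := inferInstance

section A2

attribute [local instance] A2.commRing

instance : Module.Finite Rx A2 := (monic_X_pow 2).finite_quotient

lemma zq_mul_self : zq * zq = 0 := by
  rw [zq, ← map_mul, Ideal.Quotient.eq_zero_iff_mem, ← sq]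
  exact Ideal.subset_span rfl

def zCoeff : A2 →ₗ[Rx] Rx := (lcoeff Rx 1).comp (AdjoinRoot.modByMonicHom (monic_X_pow 2))

lemma zCoeff_mk (p : Rx[X]) : zCoeff (Ideal.Quotient.mk _ p) = p.coeff 1 := by
  change (p %ₘ X ^ 2).coeff 1 = p.coeff 1
  rw [modByMonic_eq_sub_mul_div, coeff_sub, mul_comm, coeff_mul_X_pow',
    if_neg (by norm_num), sub_zero]

lemma zCoeff_one : zCoeff 1 = 0 :=
  (zCoeff_mk 1).trans (by simp [coeff_one])

lemma zCoeff_zq : zCoeff zq = 1 :=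
  (zCoeff_mk X).trans coeff_X_one

lemma eq_smul_one_add_smul_zq (a : A2) : a = zCoeff (zq * a) • 1 + zCoeff a • zq := by
  obtain ⟨p, rfl⟩ := Ideal.Quotient.mk_surjective a
  rw [zq, ← map_mul, zCoeff_mk, zCoeff_mk, coeff_X_mul, ← map_one (Ideal.Quotient.mk _),
    ← Ideal.Quotient.mkₐ_eq_mk Rx, ← map_smul, ← map_smul, ← map_add, Ideal.Quotient.mkₐ_eq_mk,
    Ideal.Quotient.eq, Ideal.mem_span_singleton, X_pow_dvd_iff]
  intro d hd
  interval_cases d <;> simp [coeff_one]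

lemma A2.linearMap_ext {N : Type*} [AddCommMonoid N] [Module Rx N] {f g : A2 →ₗ[Rx] N}
    (h1 : f 1 = g 1) (hz : f zq = g zq) : f = g :=
  LinearMap.ext fun a => by
    rw [eq_smul_one_add_smul_zq a, map_add, map_add, map_smul, map_smul, map_smul, map_smul, h1, hz]

theorem bijective_mul_compr₂_zCoeff : Function.Bijective ((LinearMap.mul Rx A2).compr₂ zCoeff) := by
  refine ⟨fun a b hab => ?_, fun k => ⟨k zq • 1 + k 1 • zq, A2.linearMap_ext ?_ ?_⟩⟩
  · rw [eq_smul_one_add_smul_zq a, eq_smul_one_add_smul_zq b]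
    have h1 := congr($hab 1)
    have hz := congr($hab zq)
    simp only [LinearMap.compr₂_apply, LinearMap.mul_apply', mul_one] at h1 hz
    rw [h1, mul_comm, hz, mul_comm]
  · simp [zCoeff_one, zCoeff_zq]
  · simp [zq_mul_self, zCoeff_zq]

lemma xq_eq_smul_one : xq = (PowerSeries.X : Rx) • (1 : A2) := by
  rw [Algebra.smul_def, mul_one]
  rfl

lemma isTorsionFree_powerSeries_of_isTorsionFree {M : Type} [AddCommGroup M] [Module A2 M]
    [Module Rx M] [IsScalarTower Rx A2 M] (hM : IsTorsionFree M) : Module.IsTorsionFree Rx M := by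
  refine .of_smul_eq_zero fun r m hrm => or_iff_not_imp_left.2 fun hr => ?_
  obtain ⟨n, u, rfl⟩ :=
    IsDiscreteValuationRing.eq_unit_mul_pow_irreducible hr PowerSeries.X_irreducible
  refine hM m n ?_
  rw [xq_eq_smul_one, _root_.smul_pow, one_pow, smul_one_smul, ← u.inv_mul_cancel_left (_ ^ n),
    mul_smul, hrm, smul_zero]

theorem bijective_dual_eval_of_isTorsionFree (M : Type) [AddCommGroup M] [Module A2 M]
    [Module Rx M] [IsScalarTower Rx A2 M] [Module.Finite A2 M] (hM : IsTorsionFree M) :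
    Function.Bijective (Dual.eval A2 M) := by
  have : Module.IsTorsionFree Rx M := isTorsionFree_powerSeries_of_isTorsionFree hM
  have : Module.Finite Rx M := .trans A2 M
  exact (bijective_dual_eval_iff_of_frobenius M bijective_mul_compr₂_zCoeff).2
    (bijective_dual_eval Rx M)

end A2

theorem stmt_7 (M : Type) [AddCommGroup M] [Module A2 M] [Module.Finite A2 M]
    (hM : IsTorsionFree M) :
    Function.Bijective (Module.Dual.eval A2 M) := by
  let := A2.commRing
  let : Module Rx M := .compHom M (algebraMap Rx A2)
  have : IsScalarTower Rx A2 M := .of_algebraMap_smul fun _ _ => rfl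
  exact bijective_dual_eval_of_isTorsionFree M hM
end
end
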